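/- Let n ≥ 2 and d = n(n−1)/2. Let f̃ : ℝ^{n×n} → ℝ be continuously differentiable, positive, and spectral (f̃(QZQᵀ) = f̃(Z) for every Q ∈ O(n) and every Z ∈ ℝ^{n×n}), with ∫_{SO(n)} f̃ dμ = 1. Fix R ∈ SO(n) and the score map G(Z) = (1/f̃(Z))·skew((∇f̃(Z))ᵀZ). For 1 ≤ p < q ≤ n define h_{pq}(Z) = ⟨G(Z), R·E_{pq}·Rᵀ⟩, where E_{pq} is the n×n matrix with (p,q) entry 1/√2, (q,p) entry −1/√2 and zeros elsewhere. Then for all index pairs (p,q) and (r,s) with p<q and r<s: ∫_{SO(n)} h_{pq}(Z)·h_{rs}(Z)·f̃(Z) dμ(Z) equals (1/d)·∫_{SO(n)} ‖G(Z)‖_F² f̃(Z) dμ(Z) if (p,q) = (r,s), and equals 0 otherwise, where ‖·‖_F is the Frobenius norm. -/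

import Mathlib

open Matrix MeasureTheory Real

noncomputable section

attribute [local instance] Matrix.normedAddCommGroup Matrix.normedSpace

/-- The special orthogonal group `SO(n)`, as a set of `n × n` real matrices. -/
def SO (n : ℕ) : Set (Matrix (Fin n) (Fin n) ℝ) :=
  {A | A * Aᵀ = 1 ∧ A.det = 1}

/-- The orthogonal group `O(n)`, as a set of `n × n` real matrices. -/
def ON (n : ℕ) : Set (Matrix (Fin n) (Fin n) ℝ) :=
  {A | A * Aᵀ = 1}

instance {n : ℕ} : MeasurableSpace (Matrix (Fin n) (Fin n) ℝ) :=
  (inferInstance : MeasurableSpace (Fin n → Fin n → ℝ))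

/-- `μ` is the Haar probability measure of `SO(n)`. -/
def IsHaarSO (n : ℕ) (μ : Measure (Matrix (Fin n) (Fin n) ℝ)) : Prop :=
  IsProbabilityMeasure μ ∧ μ (SO n)ᶜ = 0 ∧
    (∀ g ∈ SO n, Measure.map (fun Z => g * Z) μ = μ) ∧
    (∀ g ∈ SO n, Measure.map (fun Z => Z * g) μ = μ)

/-- The skew-symmetric part `(A - Aᵀ)/2` of a square matrix. -/
def skewPart {n : ℕ} (A : Matrix (Fin n) (Fin n) ℝ) : Matrix (Fin n) (Fin n) ℝ :=
  (2 : ℝ)⁻¹ • (A - Aᵀ)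

/-- The Frobenius inner product `⟨A, B⟩ = trace(Aᵀ B)`. -/
def frobInner {n : ℕ} (A B : Matrix (Fin n) (Fin n) ℝ) : ℝ :=
  (Aᵀ * B).trace

/-- The Euclidean (Frobenius) gradient of `f : ℝ^{n×n} → ℝ`. -/
def grad {n : ℕ} (f : Matrix (Fin n) (Fin n) ℝ → ℝ) (Z : Matrix (Fin n) (Fin n) ℝ) :
    Matrix (Fin n) (Fin n) ℝ :=
  Matrix.of fun i j => fderiv ℝ f Z (Matrix.single i j 1)

/-- The score map `G(Z) = (1 / f(Z)) · skew((∇f(Z))ᵀ Z)`. -/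
def scoreG {n : ℕ} (f : Matrix (Fin n) (Fin n) ℝ → ℝ) (Z : Matrix (Fin n) (Fin n) ℝ) :
    Matrix (Fin n) (Fin n) ℝ :=
  (f Z)⁻¹ • skewPart ((grad f Z)ᵀ * Z)

/-- The elementary skew-symmetric matrix `E_{pq}` with `(p,q)` entry `1/√2`, `(q,p)` entry
`-1/√2` and zeros elsewhere. -/
def Ebasis {n : ℕ} (p q : Fin n) : Matrix (Fin n) (Fin n) ℝ :=
  (Real.sqrt 2)⁻¹ • (Matrix.single p q 1 - Matrix.single q p 1)

/-- `h_{pq}(Z) = ⟨G(Z), R · E_{pq} · Rᵀ⟩`. -/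
def hFun {n : ℕ} (f : Matrix (Fin n) (Fin n) ℝ → ℝ) (R : Matrix (Fin n) (Fin n) ℝ)
    (p q : Fin n) (Z : Matrix (Fin n) (Fin n) ℝ) : ℝ :=
  frobInner (scoreG f Z) (R * Ebasis p q * Rᵀ)


/-!
Spectrality of `f` makes the score equivariant, `G(QZQᵀ) = Q G(Z) Qᵀ` for `Q ∈ O(n)`, and the
Haar measure of `SO(n)` is invariant under conjugation by every `Q ∈ O(n)` (by uniqueness of
Haar measure). Hence the form `T(A, B) = ∫ ⟨G, A⟩ ⟨G, B⟩ f dμ` satisfies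
`T(QAQᵀ, QBQᵀ) = T(A, B)`, which removes `R`. A diagonal sign change negating `E_pq` and fixing
`E_rs` shows `T(E_pq, E_rs) = 0` for distinct pairs, and a permutation matrix carrying one pair to
another shows that `T(E_pq, E_pq)` is the same for all `d` pairs. As `G` is skew-symmetric and the
`E_pq` are an orthonormal basis of the skew-symmetric matrices, these `d` equal terms add up to
`∫ ‖G‖² f dμ`.
-/

open scoped ENNReal

theorem MeasureTheory.Measure.eq_of_map_mul_left_of_map_mul_right {M : Type*} [Monoid M]
    [MeasurableSpace M] [MeasurableMul₂ M] {S : Set M} {μ ν : Measure M}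
    [IsProbabilityMeasure μ] [IsProbabilityMeasure ν] (hμS : μ Sᶜ = 0) (hνS : ν Sᶜ = 0)
    (hμ : ∀ g ∈ S, μ.map (g * ·) = μ) (hν : ∀ g ∈ S, ν.map (· * g) = ν) : μ = ν := by
  ext s hs
  have hind : Measurable (s.indicator (1 : M → ℝ≥0∞)) := measurable_one.indicator hs
  have hleft : ∀ᵐ x ∂ν, ∫⁻ y, s.indicator 1 (x * y) ∂μ = μ s := by
    filter_upwards [ae_iff.2 hνS] with x hx
    rw [← lintegral_map hind (measurable_const_mul x), hμ x hx, lintegral_indicator_one hs]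
  have hright : ∀ᵐ y ∂μ, ∫⁻ x, s.indicator 1 (x * y) ∂ν = ν s := by
    filter_upwards [ae_iff.2 hμS] with y hy
    rw [← lintegral_map hind (measurable_mul_const y), hν y hy, lintegral_indicator_one hs]
  calc μ s = ∫⁻ x, ∫⁻ y, s.indicator 1 (x * y) ∂μ ∂ν := by
        simp [lintegral_congr_ae hleft]
    _ = ∫⁻ y, ∫⁻ x, s.indicator 1 (x * y) ∂ν ∂μ :=
        lintegral_lintegral_swap (hind.comp measurable_mul).aemeasurable
    _ = ν s := by simp [lintegral_congr_ae hright]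

section

variable {n : ℕ}

instance : BorelSpace (Matrix (Fin n) (Fin n) ℝ) :=
  (inferInstance : BorelSpace (Fin n → Fin n → ℝ))

instance : SecondCountableTopology (Matrix (Fin n) (Fin n) ℝ) :=
  (inferInstance : SecondCountableTopology (Fin n → Fin n → ℝ))

namespace ON

variable {Q : Matrix (Fin n) (Fin n) ℝ}

lemma transpose_mul_self (hQ : Q ∈ ON n) : Qᵀ * Q = 1 :=
  mul_eq_one_comm.1 hQ

lemma transpose_mem (hQ : Q ∈ ON n) : Qᵀ ∈ ON n := by
  simpa [ON] using transpose_mul_self hQ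

lemma transpose_mul_conj (hQ : Q ∈ ON n) (M : Matrix (Fin n) (Fin n) ℝ) :
    Qᵀ * (Q * M * Qᵀ) * Q = M := by
  simp only [← Matrix.mul_assoc, transpose_mul_self hQ, Matrix.one_mul]
  rw [Matrix.mul_assoc, transpose_mul_self hQ, Matrix.mul_one]

lemma conj_transpose_mul (hQ : Q ∈ ON n) (M : Matrix (Fin n) (Fin n) ℝ) :
    Q * (Qᵀ * M * Q) * Qᵀ = M := by
  simpa using transpose_mul_conj (transpose_mem hQ) M

lemma conj_mem_SO {Z : Matrix (Fin n) (Fin n) ℝ} (hQ : Q ∈ ON n) (hZ : Z ∈ SO n) :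
    Q * Z * Qᵀ ∈ SO n := by
  have hdet : Q.det * Q.det = 1 := by simpa using congrArg Matrix.det hQ
  refine ⟨?_, ?_⟩
  · simp only [Matrix.transpose_mul, Matrix.transpose_transpose, ← Matrix.mul_assoc]
    rw [Matrix.mul_assoc (Q * Z), transpose_mul_self hQ, Matrix.mul_one, Matrix.mul_assoc Q,
      hZ.1, Matrix.mul_one, hQ]
  · simp [hZ.2]; linarith

end ON

lemma isCompact_SO : IsCompact (SO n) := by
  refine Metric.isCompact_of_isClosed_isBounded ?_ ?_
  · exact (isClosed_eq (by fun_prop) continuous_const).inter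
      (isClosed_eq (by fun_prop) continuous_const)
  · refine isBounded_iff_forall_norm_le.2 ⟨1, fun Z hZ => (Matrix.norm_le_iff zero_le_one).2
      fun i j => entry_norm_bound_of_unitary ?_ i j⟩
    rw [Matrix.mem_unitaryGroup_iff]
    simpa [Matrix.star_eq_conjTranspose] using hZ.1

def conjON {Q : Matrix (Fin n) (Fin n) ℝ} (hQ : Q ∈ ON n) :
    Matrix (Fin n) (Fin n) ℝ ≃L[ℝ] Matrix (Fin n) (Fin n) ℝ :=
  LinearEquiv.toContinuousLinearEquiv
    { toFun := fun Z => Q * Z * Qᵀ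
      invFun := fun Z => Qᵀ * Z * Q
      map_add' := fun Z W => by simp [Matrix.mul_add, Matrix.add_mul]
      map_smul' := fun c Z => by simp
      left_inv := ON.transpose_mul_conj hQ
      right_inv := ON.conj_transpose_mul hQ }

@[simp] lemma conjON_apply {Q : Matrix (Fin n) (Fin n) ℝ} (hQ : Q ∈ ON n)
    (Z : Matrix (Fin n) (Fin n) ℝ) : conjON hQ Z = Q * Z * Qᵀ := rfl

lemma IsHaarSO.map_conj {μ : Measure (Matrix (Fin n) (Fin n) ℝ)} (hμ : IsHaarSO n μ)
    {Q : Matrix (Fin n) (Fin n) ℝ} (hQ : Q ∈ ON n) :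
    μ.map (fun Z => Q * Z * Qᵀ) = μ := by
  obtain ⟨hprob, hSO, hleft, hright⟩ := hμ
  -- `Q` may have determinant `-1`, so this is not bi-invariance: compare the left-invariant
  -- pushforward with the right-invariant `μ` by uniqueness.
  have hconj : Measurable fun Z : Matrix (Fin n) (Fin n) ℝ => Q * Z * Qᵀ := by fun_prop
  have : IsProbabilityMeasure (μ.map fun Z => Q * Z * Qᵀ) :=
    Measure.isProbabilityMeasure_map hconj.aemeasurable
  refine Measure.eq_of_map_mul_left_of_map_mul_right (S := SO n) ?_ hSO ?_ hright
  · rw [Measure.map_apply hconj isCompact_SO.isClosed.measurableSet.compl]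
    exact measure_mono_null (fun Z hZ hZSO => hZ (ON.conj_mem_SO hQ hZSO)) hSO
  · intro g hg
    have hconj_mul :
        (g * ·) ∘ (fun Z => Q * Z * Qᵀ) = (fun Z => Q * Z * Qᵀ) ∘ (Qᵀ * g * Q * ·) := by
      ext1 Z
      simp only [Function.comp_apply, ← Matrix.mul_assoc, show Q * Qᵀ = 1 from hQ, Matrix.one_mul]
    rw [Measure.map_map (measurable_const_mul g) hconj, hconj_mul,
      ← Measure.map_map hconj (measurable_const_mul _),
      hleft _ (by simpa using ON.conj_mem_SO (ON.transpose_mem hQ) hg)]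

lemma IsHaarSO.integral_comp_conj {E : Type*} [NormedAddCommGroup E] [NormedSpace ℝ E]
    {μ : Measure (Matrix (Fin n) (Fin n) ℝ)} (hμ : IsHaarSO n μ)
    {Q : Matrix (Fin n) (Fin n) ℝ} (hQ : Q ∈ ON n) (F : Matrix (Fin n) (Fin n) ℝ → E) :
    ∫ Z, F (Q * Z * Qᵀ) ∂μ = ∫ Z, F Z ∂μ := by
  conv_rhs => rw [← hμ.map_conj hQ]
  exact ((conjON hQ).toHomeomorph.measurableEmbedding.integral_map F).symm

lemma frobInner_eq_sum (A B : Matrix (Fin n) (Fin n) ℝ) :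
    frobInner A B = ∑ i, ∑ j, A i j * B i j := by
  simp only [frobInner, Matrix.trace, Matrix.diag, Matrix.mul_apply, Matrix.transpose_apply]
  exact Finset.sum_comm

lemma frobInner_single_one (A : Matrix (Fin n) (Fin n) ℝ) (i j : Fin n) :
    frobInner A (Matrix.single i j 1) = A i j := by
  simp [frobInner, Matrix.trace_mul_single]

lemma frobInner_smul_right (A B : Matrix (Fin n) (Fin n) ℝ) (c : ℝ) :
    frobInner A (c • B) = c * frobInner A B := by
  simp [frobInner]

lemma frobInner_sub_right (A B C : Matrix (Fin n) (Fin n) ℝ) :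
    frobInner A (B - C) = frobInner A B - frobInner A C := by
  simp [frobInner, Matrix.mul_sub]

lemma frobInner_conj_right (A B Q : Matrix (Fin n) (Fin n) ℝ) :
    frobInner A (Q * B * Qᵀ) = frobInner (Qᵀ * A * Q) B := by
  simp only [frobInner, Matrix.transpose_mul, Matrix.transpose_transpose, ← Matrix.mul_assoc]
  rw [Matrix.trace_mul_comm]
  simp only [Matrix.mul_assoc]

lemma frobInner_conj_conj {Q : Matrix (Fin n) (Fin n) ℝ} (hQ : Q ∈ ON n)
    (A B : Matrix (Fin n) (Fin n) ℝ) :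
    frobInner (Q * A * Qᵀ) (Q * B * Qᵀ) = frobInner A B := by
  rw [frobInner_conj_right, ON.transpose_mul_conj hQ]

@[fun_prop]
lemma Continuous.frobInner {α : Type*} [TopologicalSpace α] {A B : α → Matrix (Fin n) (Fin n) ℝ}
    (hA : Continuous A) (hB : Continuous B) : Continuous fun x => frobInner (A x) (B x) := by
  unfold _root_.frobInner; fun_prop

lemma fderiv_apply_eq_frobInner_grad (f : Matrix (Fin n) (Fin n) ℝ → ℝ)
    (Z M : Matrix (Fin n) (Fin n) ℝ) : fderiv ℝ f Z M = frobInner (grad f Z) M := by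
  have hM : M = ∑ i, ∑ j, M i j • Matrix.single i j (1 : ℝ) := by
    simpa [Matrix.smul_single] using Matrix.matrix_eq_sum_single M
  conv_lhs => rw [hM]
  simp only [map_sum, map_smul, smul_eq_mul, frobInner_eq_sum, grad, Matrix.of_apply, mul_comm]

lemma grad_conj {f : Matrix (Fin n) (Fin n) ℝ → ℝ}
    (hspec : ∀ Q ∈ ON n, ∀ Z, f (Q * Z * Qᵀ) = f Z) {Q : Matrix (Fin n) (Fin n) ℝ}
    (hQ : Q ∈ ON n) (Z : Matrix (Fin n) (Fin n) ℝ) :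
    grad f (Q * Z * Qᵀ) = Q * grad f Z * Qᵀ := by
  have hinv : f ∘ conjON (ON.transpose_mem hQ) = f :=
    funext fun W => by simpa using hspec _ (ON.transpose_mem hQ) W
  ext i j
  calc grad f (Q * Z * Qᵀ) i j
      = fderiv ℝ (f ∘ conjON (ON.transpose_mem hQ)) (Q * Z * Qᵀ) (Matrix.single i j 1) := by
        rw [hinv]; rfl
    _ = fderiv ℝ f Z (Qᵀ * Matrix.single i j 1 * Q) := by
        -- `erw`: the topology in the type of `conjON` is not syntactically the normed one
        erw [(conjON (ON.transpose_mem hQ)).comp_right_fderiv]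
        show fderiv ℝ f (Qᵀ * (Q * Z * Qᵀ) * Qᵀᵀ) (Qᵀ * Matrix.single i j 1 * Qᵀᵀ) = _
        rw [Matrix.transpose_transpose, ON.transpose_mul_conj hQ]
    _ = (Q * grad f Z * Qᵀ) i j := by
        have h := frobInner_conj_right (grad f Z) (Matrix.single i j 1) Qᵀ
        rw [Matrix.transpose_transpose] at h
        rw [fderiv_apply_eq_frobInner_grad, h, frobInner_single_one]

lemma skewPart_conj (A Q : Matrix (Fin n) (Fin n) ℝ) :
    skewPart (Q * A * Qᵀ) = Q * skewPart A * Qᵀ := by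
  simp [skewPart, Matrix.mul_sub, Matrix.sub_mul, Matrix.mul_assoc]

lemma skewPart_transpose (A : Matrix (Fin n) (Fin n) ℝ) : (skewPart A)ᵀ = -skewPart A := by
  simp [skewPart, ← smul_neg]

lemma scoreG_conj {f : Matrix (Fin n) (Fin n) ℝ → ℝ}
    (hspec : ∀ Q ∈ ON n, ∀ Z, f (Q * Z * Qᵀ) = f Z) {Q : Matrix (Fin n) (Fin n) ℝ}
    (hQ : Q ∈ ON n) (Z : Matrix (Fin n) (Fin n) ℝ) :
    scoreG f (Q * Z * Qᵀ) = Q * scoreG f Z * Qᵀ := by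
  have h : (Q * grad f Z * Qᵀ)ᵀ * (Q * Z * Qᵀ) = Q * ((grad f Z)ᵀ * Z) * Qᵀ := by
    simp only [Matrix.transpose_mul, Matrix.transpose_transpose, ← Matrix.mul_assoc]
    rw [Matrix.mul_assoc _ Qᵀ Q, ON.transpose_mul_self hQ, Matrix.mul_one]
  rw [scoreG, scoreG, grad_conj hspec hQ, hspec Q hQ, h, skewPart_conj,
    Matrix.mul_smul, Matrix.smul_mul]

lemma scoreG_transpose (f : Matrix (Fin n) (Fin n) ℝ → ℝ) (Z : Matrix (Fin n) (Fin n) ℝ) :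
    (scoreG f Z)ᵀ = -scoreG f Z := by
  rw [scoreG, Matrix.transpose_smul, skewPart_transpose, smul_neg]

lemma continuous_scoreG {f : Matrix (Fin n) (Fin n) ℝ → ℝ} (hf : ContDiff ℝ 1 f)
    (hf0 : ∀ Z, f Z ≠ 0) : Continuous (scoreG f) := by
  have hgrad : Continuous (grad f) :=
    continuous_pi fun i => continuous_pi fun j =>
      (hf.continuous_fderiv one_ne_zero).clm_apply continuous_const
  unfold scoreG skewPart
  exact (hf.continuous.inv₀ hf0).smul (by fun_prop)

lemma Equiv.Perm.exists_apply_eq_and_apply_eq {α : Type*} [DecidableEq α] {p q r s : α}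
    (hpq : p ≠ q) (hrs : r ≠ s) : ∃ σ : Equiv.Perm α, σ p = r ∧ σ q = s := by
  set τ := Equiv.swap p r
  have hτq : τ q ≠ r := fun h => hpq (τ.injective (h.trans (Equiv.swap_apply_left p r).symm)).symm
  refine ⟨τ.trans (Equiv.swap (τ q) s), ?_, Equiv.swap_apply_left _ _⟩
  simp only [Equiv.trans_apply, τ, Equiv.swap_apply_left]
  exact Equiv.swap_apply_of_ne_of_ne hτq.symm hrs

lemma permMatrix_mem_ON (σ : Equiv.Perm (Fin n)) : σ.permMatrix ℝ ∈ ON n := by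
  simp [ON, ← Matrix.permMatrix_mul]

lemma permMatrix_conj_Ebasis (σ : Equiv.Perm (Fin n)) (a b : Fin n) :
    σ.permMatrix ℝ * Ebasis (σ a) (σ b) * (σ.permMatrix ℝ)ᵀ = Ebasis a b := by
  simp [Equiv.Perm.permMatrix, Matrix.transpose_permMatrix, PEquiv.toMatrix_toPEquiv_mul,
    PEquiv.mul_toMatrix_toPEquiv, Ebasis, Matrix.submatrix_sub, Equiv.Perm.inv_def]

lemma diagonal_mem_ON {ε : Fin n → ℝ} (hε : ∀ i, ε i * ε i = 1) : Matrix.diagonal ε ∈ ON n := by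
  simp [ON, Matrix.diagonal_mul_diagonal, hε]

lemma diagonal_conj_Ebasis (ε : Fin n → ℝ) (a b : Fin n) :
    Matrix.diagonal ε * Ebasis a b * (Matrix.diagonal ε)ᵀ = (ε a * ε b) • Ebasis a b := by
  ext i j
  simp only [Ebasis, Matrix.diagonal_transpose, Matrix.mul_diagonal, Matrix.diagonal_mul,
    Matrix.smul_apply, Matrix.sub_apply, Matrix.single_apply, smul_eq_mul]
  split_ifs with h1 h2 h2 <;> (try obtain ⟨rfl, rfl⟩ := h1) <;> (try obtain ⟨rfl, rfl⟩ := h2) <;>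
    ring

lemma frobInner_Ebasis_of_transpose_eq_neg {S : Matrix (Fin n) (Fin n) ℝ} (hS : Sᵀ = -S)
    (a b : Fin n) : frobInner S (Ebasis a b) = √2 * S a b := by
  have hba : S b a = -S a b := by simpa using congrFun (congrFun hS a) b
  rw [Ebasis, frobInner_smul_right, frobInner_sub_right, frobInner_single_one,
    frobInner_single_one, hba]
  field_simp
  rw [Real.sq_sqrt zero_le_two]
  ring

lemma sum_frobInner_Ebasis_mul_self {S : Matrix (Fin n) (Fin n) ℝ} (hS : Sᵀ = -S) :
    ∑ x ∈ Finset.univ.filter (fun x : Fin n × Fin n => x.1 < x.2),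
      frobInner S (Ebasis x.1 x.2) * frobInner S (Ebasis x.1 x.2) = frobInner S S := by
  have hS' : ∀ a b, S b a = -S a b := fun a b => by simpa using congrFun (congrFun hS a) b
  have hsplit : ∀ a b, S a b * S a b =
      (if a < b then S a b * S a b else 0) + (if b < a then S b a * S b a else 0) := by
    intro a b
    rcases lt_trichotomy a b with h | rfl | h
    · simp [h, h.not_gt]
    · have : S a a = 0 := by linarith [hS' a a]
      simp [this]
    · simp [h, h.not_gt, hS' a b]
  rw [Finset.sum_filter, Fintype.sum_prod_type, frobInner_eq_sum]
  simp only [frobInner_Ebasis_of_transpose_eq_neg hS]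
  conv_rhs => enter [2, a, 2, b]; rw [hsplit]
  simp only [Finset.sum_add_distrib]
  rw [Finset.sum_comm (f := fun a b => if b < a then S b a * S b a else 0),
    ← Finset.sum_add_distrib]
  refine Finset.sum_congr rfl fun a _ => ?_
  rw [← Finset.sum_add_distrib]
  refine Finset.sum_congr rfl fun b _ => ?_
  split_ifs
  · linear_combination S a b * S a b * Real.mul_self_sqrt (zero_le_two (α := ℝ))
  · simp

lemma Fin.card_filter_fst_lt_snd :
    (Finset.univ.filter fun x : Fin n × Fin n => x.1 < x.2).card = n * (n - 1) / 2 := by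
  rw [← Finset.univ_product_univ, Finset.card_product_filter_lt, Finset.card_univ,
    Fintype.card_fin, Nat.choose_two_right]

lemma IsHaarSO.integrable_of_continuous {E : Type*} [NormedAddCommGroup E]
    {μ : Measure (Matrix (Fin n) (Fin n) ℝ)} (hμ : IsHaarSO n μ)
    {F : Matrix (Fin n) (Fin n) ℝ → E} (hF : Continuous F) : Integrable F μ := by
  have := hμ.1
  obtain ⟨C, hC⟩ := isCompact_SO.exists_bound_of_continuousOn hF.continuousOn
  exact Integrable.of_bound hF.aestronglyMeasurable C
    (by filter_upwards [ae_iff.2 hμ.2.1] with Z hZ using hC Z hZ)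

def scoreCov (μ : Measure (Matrix (Fin n) (Fin n) ℝ)) (f : Matrix (Fin n) (Fin n) ℝ → ℝ)
    (A B : Matrix (Fin n) (Fin n) ℝ) : ℝ :=
  ∫ Z, frobInner (scoreG f Z) A * frobInner (scoreG f Z) B * f Z ∂μ

section scoreCov

variable {μ : Measure (Matrix (Fin n) (Fin n) ℝ)} {f : Matrix (Fin n) (Fin n) ℝ → ℝ}

lemma scoreCov_conj (hμ : IsHaarSO n μ) (hspec : ∀ Q ∈ ON n, ∀ Z, f (Q * Z * Qᵀ) = f Z)
    {Q : Matrix (Fin n) (Fin n) ℝ} (hQ : Q ∈ ON n) (A B : Matrix (Fin n) (Fin n) ℝ) :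
    scoreCov μ f (Q * A * Qᵀ) (Q * B * Qᵀ) = scoreCov μ f A B := by
  rw [scoreCov, scoreCov, ← hμ.integral_comp_conj hQ]
  simp only [scoreG_conj hspec hQ, frobInner_conj_conj hQ, hspec Q hQ]

lemma scoreCov_smul_left (c : ℝ) (A B : Matrix (Fin n) (Fin n) ℝ) :
    scoreCov μ f (c • A) B = c * scoreCov μ f A B := by
  simp only [scoreCov, frobInner_smul_right, mul_assoc, integral_const_mul]

lemma scoreCov_Ebasis_of_ne (hμ : IsHaarSO n μ) (hspec : ∀ Q ∈ ON n, ∀ Z, f (Q * Z * Qᵀ) = f Z)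
    {p q r s : Fin n} (hpq : p < q) (hrs : r < s) (hne : (p, q) ≠ (r, s)) :
    scoreCov μ f (Ebasis p q) (Ebasis r s) = 0 := by
  obtain ⟨a, hapq, har, has⟩ : ∃ a, (a = p ∨ a = q) ∧ a ≠ r ∧ a ≠ s := by
    by_contra! h
    have hp := h p (.inl rfl)
    have hq := h q (.inr rfl)
    grind
  -- flipping the sign of coordinate `a` negates `Ebasis p q` and fixes `Ebasis r s`
  set ε : Fin n → ℝ := fun i => if i = a then -1 else 1
  have hε : ∀ i, ε i * ε i = 1 := fun i => by by_cases h : i = a <;> simp [ε, h]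
  have hflip : ε p * ε q = -1 := by
    rcases hapq with rfl | rfl <;> simp [ε, hpq.ne, hpq.ne']
  have hkeep : ε r * ε s = 1 := by simp [ε, har.symm, has.symm]
  have h := scoreCov_conj (f := f) hμ hspec (diagonal_mem_ON hε) (Ebasis p q) (Ebasis r s)
  rw [diagonal_conj_Ebasis, diagonal_conj_Ebasis, hflip, hkeep, one_smul,
    scoreCov_smul_left] at h
  linarith

lemma scoreCov_Ebasis_self_eq (hμ : IsHaarSO n μ)
    (hspec : ∀ Q ∈ ON n, ∀ Z, f (Q * Z * Qᵀ) = f Z)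
    {p q r s : Fin n} (hpq : p < q) (hrs : r < s) :
    scoreCov μ f (Ebasis p q) (Ebasis p q) = scoreCov μ f (Ebasis r s) (Ebasis r s) := by
  obtain ⟨σ, hσp, hσq⟩ := Equiv.Perm.exists_apply_eq_and_apply_eq hpq.ne hrs.ne
  rw [← permMatrix_conj_Ebasis σ p q, hσp, hσq,
    scoreCov_conj hμ hspec (permMatrix_mem_ON σ)]

lemma sum_scoreCov_Ebasis_self (hμ : IsHaarSO n μ) (hf : ContDiff ℝ 1 f) (hf0 : ∀ Z, f Z ≠ 0) :
    ∑ x ∈ Finset.univ.filter (fun x : Fin n × Fin n => x.1 < x.2),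
      scoreCov μ f (Ebasis x.1 x.2) (Ebasis x.1 x.2)
      = ∫ Z, frobInner (scoreG f Z) (scoreG f Z) * f Z ∂μ := by
  have hG := continuous_scoreG hf hf0
  simp only [scoreCov]
  rw [← integral_finsetSum _ fun x _ => hμ.integrable_of_continuous (by fun_prop)]
  congr 1 with Z
  rw [← Finset.sum_mul, sum_frobInner_Ebasis_mul_self (scoreG_transpose f Z)]

end scoreCov

end

theorem stmt5_general {n : ℕ} (μ : Measure (Matrix (Fin n) (Fin n) ℝ))
    (hμ : IsHaarSO n μ) (f : Matrix (Fin n) (Fin n) ℝ → ℝ)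
    (hf : ContDiff ℝ 1 f) (hpos : ∀ Z, 0 < f Z)
    (hspec : ∀ Q ∈ ON n, ∀ Z, f (Q * Z * Qᵀ) = f Z)
    (R : Matrix (Fin n) (Fin n) ℝ) (hR : R ∈ SO n)
    (p q r s : Fin n) (hpq : p < q) (hrs : r < s) :
    ∫ Z, hFun f R p q Z * hFun f R r s Z * f Z ∂μ =
      if (p, q) = (r, s) then
        ((n * (n - 1) / 2 : ℕ) : ℝ)⁻¹ * ∫ Z, frobInner (scoreG f Z) (scoreG f Z) * f Z ∂μ
      else 0 := by
  have hcov : ∫ Z, hFun f R p q Z * hFun f R r s Z * f Z ∂μ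
      = scoreCov μ f (Ebasis p q) (Ebasis r s) := scoreCov_conj hμ hspec hR.1 _ _
  rw [hcov]
  split_ifs with h
  · obtain ⟨rfl, rfl⟩ := Prod.mk.inj h
    set pairs := Finset.univ.filter (fun x : Fin n × Fin n => x.1 < x.2)
    have hd : (pairs.card : ℝ) ≠ 0 :=
      Nat.cast_ne_zero.2 (Finset.card_ne_zero_of_mem (by simpa [pairs] : (p, q) ∈ pairs))
    have hsum : ∑ x ∈ pairs, scoreCov μ f (Ebasis x.1 x.2) (Ebasis x.1 x.2)
        = pairs.card * scoreCov μ f (Ebasis p q) (Ebasis p q) := by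
      rw [Finset.sum_congr rfl fun x hx =>
          scoreCov_Ebasis_self_eq hμ hspec (Finset.mem_filter.1 hx).2 hpq,
        Finset.sum_const, nsmul_eq_mul]
    rw [← sum_scoreCov_Ebasis_self hμ hf fun Z => (hpos Z).ne', hsum,
      ← Fin.card_filter_fst_lt_snd, inv_mul_cancel_left₀ hd]
  · exact scoreCov_Ebasis_of_ne hμ hspec hpq hrs h

theorem stmt5 {n : ℕ} (hn : 2 ≤ n) (μ : Measure (Matrix (Fin n) (Fin n) ℝ))
    (hμ : IsHaarSO n μ) (f : Matrix (Fin n) (Fin n) ℝ → ℝ)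
    (hf : ContDiff ℝ 1 f) (hpos : ∀ Z, 0 < f Z)
    (hspec : ∀ Q ∈ ON n, ∀ Z, f (Q * Z * Qᵀ) = f Z)
    (hnorm : ∫ Z, f Z ∂μ = 1)
    (R : Matrix (Fin n) (Fin n) ℝ) (hR : R ∈ SO n)
    (p q r s : Fin n) (hpq : p < q) (hrs : r < s) :
    ∫ Z, hFun f R p q Z * hFun f R r s Z * f Z ∂μ =
      if (p, q) = (r, s) then
        ((n * (n - 1) / 2 : ℕ) : ℝ)⁻¹ * ∫ Z, frobInner (scoreG f Z) (scoreG f Z) * f Z ∂μ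
      else 0 :=
  stmt5_general μ hμ f hf hpos hspec R hR p q r s hpq hrs
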